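/- Let q = 2^m, a, b, c ∈ F_{q^3} with b = 0 and c = a^q. Then the function P(x) = a·x^{2(q+1)} + b·x^{2(q^2+q)} + c·x^{2(q^2+1)} is planar over F_{q^3}: for every δ ∈ F_{q^3}^*, x ↦ P(x+δ) + P(x) + δx is a bijection of F_{q^3}. -/

import Mathlib

/-!
Write `σ x = x ^ q`, so that `σ³ = 1` on `F_{q³}` and `P x = a (σ x · x)² + σ a (σ² x · x)²`.
Since `P` is quadratic, its derivative `D_δ x = P (x + δ) + P x + δ x` is affine over `F₂`, so
it suffices to show that `D_δ (δ y) = D_δ 0` forces `y = 0`. With `A = a (σ δ)²` and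
`z = σ y + y` that equation reads `y = A z² + σ A (σ z + z)²`. As `σ² z + σ z + z = 0`, applying
`σ` and adding gives `z = T z²` with `T = A + σ A + σ² A` fixed by `σ`. Either `z = 0`, and then
`y = 0`, or `z = T⁻¹` is fixed by `σ`, and then `0 = σ² z + σ z + z = z`, a contradiction.
-/

/-- With `σ x = x ^ q`, this is `a x^{2(q+1)} + a^q x^{2(q²+1)}`. -/
def doPoly {R : Type*} [CommSemiring R] (σ : R →+* R) (a x : R) : R :=
  a * (σ x * x) ^ 2 + σ a * (σ (σ x) * x) ^ 2

def zhouDiff {R : Type*} [Add R] [Mul R] (f : R → R) (δ x : R) : R :=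
  f (x + δ) + f x + δ * x

section CharTwoRing

variable {R : Type*} [CommRing R] [CharP R 2] (σ : R →+* R)

theorem zhouDiff_doPoly_add (a δ x y : R) :
    zhouDiff (doPoly σ a) δ (x + y) =
      zhouDiff (doPoly σ a) δ x + zhouDiff (doPoly σ a) δ y + zhouDiff (doPoly σ a) δ 0 := by
  simp only [zhouDiff, doPoly, map_add, map_zero]
  grind

theorem zhouDiff_doPoly_mul_add_zhouDiff_zero (a δ y : R) :
    zhouDiff (doPoly σ a) δ (δ * y) + zhouDiff (doPoly σ a) δ 0 =
      δ ^ 2 * (y + a * σ δ ^ 2 * (σ y + y) ^ 2 + σ (a * σ δ ^ 2) * (σ (σ y) + y) ^ 2) := by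
  simp only [zhouDiff, doPoly, map_add, map_zero, map_mul, map_pow]
  grind

end CharTwoRing

section CubicAutomorphism

variable {F : Type*} [Field F] [CharP F 2] {σ : F →+* F}

theorem eq_zero_of_add_mul_sq_add_mul_sq (hσ : ∀ x, σ (σ (σ x)) = x) {A y : F}
    (h : y + A * (σ y + y) ^ 2 + σ A * (σ (σ y) + y) ^ 2 = 0) : y = 0 := by
  set z := σ y + y with hz
  have hσσy : σ (σ y) + y = σ z + z := by rw [hz, map_add]; grind
  have htrace : σ (σ z) + σ z + z = 0 := by simp only [hz, map_add, hσ]; grind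
  rw [hσσy] at h
  have hσh := congrArg σ h
  simp only [map_add, map_mul, map_pow, map_zero] at hσh
  set T := A + σ A + σ (σ A) with hT
  have hzT : z = T * z ^ 2 := by grind
  rcases eq_or_ne z 0 with hz0 | hz0
  · simpa [hz0] using h
  have hTz : T * z = 1 := mul_left_cancel₀ hz0 (by linear_combination -hzT)
  have hσT : σ T = T := by simp only [hT, map_add, hσ]; ring
  have hσz : σ z = z := by
    have := congrArg σ hTz
    rw [map_mul, map_one, hσT, ← hTz] at this
    exact mul_left_cancel₀ (left_ne_zero_of_mul_eq_one hTz) this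
  rw [hσz, hσz] at htrace
  exact (hz0 (by grind)).elim

theorem zhouDiff_doPoly_injective (hσ : ∀ x, σ (σ (σ x)) = x) (a : F) {δ : F} (hδ : δ ≠ 0) :
    Function.Injective (zhouDiff (doPoly σ a) δ) := by
  intro x₁ x₂ h
  have hsum : x₁ + x₂ = δ * ((x₁ + x₂) / δ) := (mul_div_cancel₀ _ hδ).symm
  have hkernel := zhouDiff_doPoly_mul_add_zhouDiff_zero σ a δ ((x₁ + x₂) / δ)
  rw [← hsum, zhouDiff_doPoly_add, h, CharTwo.add_self_eq_zero, zero_add,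
    CharTwo.add_self_eq_zero, eq_comm, mul_eq_zero] at hkernel
  have hy := eq_zero_of_add_mul_sq_add_mul_sq hσ (hkernel.resolve_left (pow_ne_zero 2 hδ))
  rwa [div_eq_zero_iff, or_iff_left hδ, CharTwo.add_eq_zero] at hy

end CubicAutomorphism

theorem charP_two_of_card_eq_two_pow {F : Type*} [Field F] [Fintype F] {n : ℕ}
    (h : Fintype.card F = 2 ^ n) : CharP F 2 := by
  obtain ⟨p, hchar, k, hp, hk⟩ := FiniteField.card' F
  have hn : n ≠ 0 := by
    rintro rfl
    exact (Fintype.one_lt_card (α := F)).ne' (by rw [h, pow_zero])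
  obtain ⟨rfl, -⟩ := hp.pow_inj' Nat.prime_two k.ne_zero hn (hk.symm.trans h)
  exact hchar

theorem iterateFrobenius_iterate_eq_self {F : Type*} [Field F] [Fintype F] {p : ℕ} [Fact p.Prime]
    [CharP F p] {m k : ℕ} (h : Fintype.card F = p ^ (m * k)) (x : F) :
    (iterateFrobenius F p m)^[k] x = x := by
  rw [← iterateFrobenius_mul_apply, iterateFrobenius_def, ← h, FiniteField.pow_card]

theorem stmt_13_general (m : ℕ) (F : Type*) [Field F] [Fintype F]
    (hcard : Fintype.card F = 2 ^ (3 * m)) (a b c : F)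
    (hb : b = 0) (hc : c = a ^ (2 ^ m))
    (P : F → F)
    (hP : ∀ x : F, P x = a * x ^ (2 * (2 ^ m + 1)) +
      b * x ^ (2 * ((2 ^ m) ^ 2 + 2 ^ m)) + c * x ^ (2 * ((2 ^ m) ^ 2 + 1))) :
    ∀ δ : F, δ ≠ 0 →
      Function.Bijective (fun x : F => P (x + δ) + P x + δ * x) := by
  have := charP_two_of_card_eq_two_pow hcard
  set σ := iterateFrobenius F 2 m
  have hσ (x : F) : σ (σ (σ x)) = x :=
    iterateFrobenius_iterate_eq_self (k := 3) (by rw [hcard, mul_comm]) x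
  have hPσ : P = doPoly σ a := by
    funext x
    rw [hP, hb, hc]
    simp only [doPoly, σ, iterateFrobenius_def]
    ring
  intro δ hδ
  subst hPσ
  exact Finite.injective_iff_bijective.mp (zhouDiff_doPoly_injective hσ a hδ)

/-- P(x) = a x^{2(q+1)} + b x^{2(q²+q)} + c x^{2(q²+1)} with b = 0, c = a^q
is planar over F_{q^3}. -/
theorem stmt_13 (m : ℕ) (hm : 0 < m) (F : Type*) [Field F] [Fintype F]
    (hcard : Fintype.card F = 2 ^ (3 * m)) (a b c : F)
    (hb : b = 0) (hc : c = a ^ (2 ^ m))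
    (P : F → F)
    (hP : ∀ x : F, P x = a * x ^ (2 * (2 ^ m + 1)) +
      b * x ^ (2 * ((2 ^ m) ^ 2 + 2 ^ m)) + c * x ^ (2 * ((2 ^ m) ^ 2 + 1))) :
    ∀ δ : F, δ ≠ 0 →
      Function.Bijective (fun x : F => P (x + δ) + P x + δ * x) :=
  stmt_13_general m F hcard a b c hb hc P hP
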